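/- Let G be an ample groupoid and R a commutative ring with unit. If G has an R-dense orbit O_x such that the isotropy group algebra RG_x is a prime ring, then the convolution algebra RG is a prime ring. -/

import Mathlib

universe u

/-- An étale topological groupoid: arrows form a topological space, units are
identified with idempotent arrows via the domain map `d` and range map `r`;
the domain map is a local homeomorphism. -/
structure EtaleGroupoid : Type (u + 1) where
  Arr : Type u
  top : TopologicalSpace Arr
  d : Arr → Arr
  r : Arr → Arr
  comp : Arr → Arr → Arr
  inv : Arr → Arr
  d_d : ∀ g, d (d g) = d g
  r_d : ∀ g, r (d g) = d g
  d_r : ∀ g, d (r g) = r g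
  r_r : ∀ g, r (r g) = r g
  d_comp : ∀ g h, d g = r h → d (comp g h) = d h
  r_comp : ∀ g h, d g = r h → r (comp g h) = r g
  comp_assoc : ∀ g h k, d g = r h → d h = r k → comp (comp g h) k = comp g (comp h k)
  comp_unit_right : ∀ g, comp g (d g) = g
  comp_unit_left : ∀ g, comp (r g) g = g
  d_inv : ∀ g, d (inv g) = r g
  r_inv : ∀ g, r (inv g) = d g
  inv_inv : ∀ g, inv (inv g) = g
  inv_comp : ∀ g, comp (inv g) g = d g
  comp_inv : ∀ g, comp g (inv g) = r g
  continuous_d : @Continuous Arr Arr top top d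
  continuous_r : @Continuous Arr Arr top top r
  continuous_inv : @Continuous Arr Arr top top inv
  continuous_comp : @Continuous {p : Arr × Arr // d p.1 = r p.2} Arr
    (@instTopologicalSpaceSubtype _ _ (@instTopologicalSpaceProd _ _ top top)) top
    (fun p => comp p.val.1 p.val.2)
  etale : ∀ g : Arr, ∃ U : Set Arr, @IsOpen Arr top U ∧ g ∈ U ∧ Set.InjOn d U ∧
    ∀ V, V ⊆ U → @IsOpen Arr top V → @IsOpen Arr top (d '' V)

instance (G : EtaleGroupoid) : TopologicalSpace G.Arr := G.top

namespace EtaleGroupoid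

variable (G : EtaleGroupoid)

/-- The unit space `G⁽⁰⁾`, identified with the set of unit arrows. -/
def units : Set G.Arr := Set.range G.d

/-- A subset of the unit space is invariant if it is a union of orbits. -/
def Invariant (X : Set G.Arr) : Prop := ∀ g : G.Arr, G.d g ∈ X → G.r g ∈ X

/-- The orbit of a unit `x`. -/
def orbit (x : G.Arr) : Set G.Arr := {y | ∃ g, G.d g = x ∧ G.r g = y}

/-- `U` is an open subset of the unit space (open in the subspace topology). -/
def UnitsOpen (U : Set G.Arr) : Prop :=
  U ⊆ G.units ∧ IsOpen (Subtype.val ⁻¹' U : Set ↥G.units)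

/-- `C` is a closed subset of the unit space (closed in the subspace topology). -/
def UnitsClosed (C : Set G.Arr) : Prop :=
  C ⊆ G.units ∧ IsClosed (Subtype.val ⁻¹' C : Set ↥G.units)

/-- `X` is dense in the unit space. -/
def UnitsDense (X : Set G.Arr) : Prop :=
  Dense (Subtype.val ⁻¹' X : Set ↥G.units)

/-- `X` is nowhere dense in the unit space. -/
def UnitsNowhereDense (X : Set G.Arr) : Prop :=
  interior (closure (Subtype.val ⁻¹' X : Set ↥G.units)) = ∅

/-- Topological transitivity: every non-empty open invariant subset of the
unit space is dense. -/
def TopTransitive : Prop :=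
  ∀ U : Set G.Arr, G.UnitsOpen U → G.Invariant U → U.Nonempty → G.UnitsDense U

end EtaleGroupoid

namespace EtaleGroupoid

variable (G : EtaleGroupoid)

/-- The underlying set of the groupoid convolution algebra `RG`: the `R`-span of
characteristic functions of compact open subsets of the arrow space. -/
def AlgebraSet (R : Type) [CommRing R] : Set (G.Arr → R) :=
  (Submodule.span R {f : G.Arr → R | ∃ U : Set G.Arr,
      IsCompact U ∧ IsOpen U ∧ f = Set.indicator U fun _ => (1 : R)} :
    Submodule R (G.Arr → R))

/-- Convolution: `(f ⋆ g)(x) = ∑_{d h = d x} f (x h⁻¹) g (h)`. -/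
noncomputable def conv {R : Type} [CommRing R] (f g : G.Arr → R) : G.Arr → R := fun x =>
  ∑ᶠ (h : G.Arr) (_ : G.d h = G.d x), f (G.comp x (G.inv h)) * g h

/-- The convolution algebra `RG` is a prime ring (elementwise formulation). -/
def AlgPrime (R : Type) [CommRing R] : Prop :=
  (∃ f ∈ G.AlgebraSet R, f ≠ 0) ∧
  ∀ f ∈ G.AlgebraSet R, ∀ g ∈ G.AlgebraSet R,
    (∀ h ∈ G.AlgebraSet R, G.conv (G.conv f h) g = 0) → f = 0 ∨ g = 0

/-- The convolution algebra `RG` is a semiprime ring (elementwise formulation). -/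
def AlgSemiprime (R : Type) [CommRing R] : Prop :=
  ∀ f ∈ G.AlgebraSet R, (∀ h ∈ G.AlgebraSet R, G.conv (G.conv f h) f = 0) → f = 0

/-- `X ⊆ G⁽⁰⁾` is `R`-dense: every non-zero element of `RG` is non-zero at some
arrow whose domain lies in `X`. -/
def RDense (R : Type) [CommRing R] (X : Set G.Arr) : Prop :=
  ∀ f ∈ G.AlgebraSet R, f ≠ (0 : G.Arr → R) → ∃ g : G.Arr, f g ≠ 0 ∧ G.d g ∈ X

/-- An étale groupoid is ample if its unit space is (locally compact) Hausdorff
with a basis of compact open sets. -/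
def Ample : Prop :=
  T2Space ↥G.units ∧
  ∀ x ∈ G.units, ∀ U : Set G.Arr, G.UnitsOpen U → x ∈ U →
    ∃ K : Set G.Arr, K ⊆ U ∧ x ∈ K ∧ IsCompact K ∧ G.UnitsOpen K

/-- A groupoid is effective if the interior of the isotropy bundle is the unit
space. -/
def Effective : Prop := interior {g : G.Arr | G.d g = G.r g} = G.units

end EtaleGroupoid

namespace EtaleGroupoid

variable (G : EtaleGroupoid)

/-- The isotropy group of `G` at a unit `x`. -/
def IsoGrp (x : G.Arr) : Type _ := {g : G.Arr // G.d g = x ∧ G.r g = x}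

/-- The group structure on the isotropy group at a unit `x`. -/
def isoGroup (x : G.Arr) (hx : G.d x = x) : Group (G.IsoGrp x) where
  mul a b := ⟨G.comp a.1 b.1, by
    have hc : G.d a.1 = G.r b.1 := by rw [a.2.1, b.2.2]
    exact ⟨by rw [G.d_comp _ _ hc, b.2.1], by rw [G.r_comp _ _ hc, a.2.2]⟩⟩
  one := ⟨x, hx, by rw [← hx]; exact G.r_d x⟩
  inv a := ⟨G.inv a.1, by rw [G.d_inv, a.2.2], by rw [G.r_inv, a.2.1]⟩
  mul_assoc a b c := Subtype.ext (G.comp_assoc _ _ _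
    (by rw [a.2.1, b.2.2]) (by rw [b.2.1, c.2.2]))
  one_mul a := Subtype.ext (by
    have h := G.comp_unit_left a.1
    rw [a.2.2] at h
    exact h)
  mul_one a := Subtype.ext (by
    have h := G.comp_unit_right a.1
    rw [a.2.1] at h
    exact h)
  inv_mul_cancel a := Subtype.ext (by
    show G.comp (G.inv a.1) a.1 = x
    rw [G.inv_comp, a.2.1])

end EtaleGroupoid

/-! If `f ⋆ RG ⋆ g = 0` with `f, g ≠ 0`, `R`-density gives arrows `α`, `β` with `f α ≠ 0`,
`g β ≠ 0` and domains in the orbit of `x`. Transporting along arrows out of `x` turns the values of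
`f` near `α` and of `g` near `β` into elements `F`, `H` of `R G_x` with non-zero identity
coefficient. Every `c ∈ R G_x` is realised by a combination `m` of compact open bisections through
the corresponding arrows, kept (by the Hausdorff unit space) away from the finitely many other
ranges of arrows in the support of `g` over `d β`. Then the transported values of `f ⋆ m ⋆ g` are
the coefficients of `F c H`, so `F (R G_x) H = 0`, contradicting primeness of `R G_x`. -/

namespace EtaleGroupoid

variable {G : EtaleGroupoid}

theorem comp_inv_cancel_right {p q : G.Arr} (h : G.d p = G.r q) :
    G.comp (G.comp p q) (G.inv q) = p := by
  rw [G.comp_assoc p q (G.inv q) h (by rw [G.r_inv]), G.comp_inv, ← h, G.comp_unit_right]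

theorem inv_comp_cancel_right {p q : G.Arr} (h : G.d p = G.d q) :
    G.comp (G.comp p (G.inv q)) q = p := by
  rw [G.comp_assoc p (G.inv q) q (by rw [G.r_inv, h]) (by rw [G.d_inv]), G.inv_comp, ← h,
    G.comp_unit_right]

theorem inv_comp_cancel_left {p q : G.Arr} (h : G.d p = G.r q) :
    G.comp (G.inv p) (G.comp p q) = q := by
  rw [← G.comp_assoc (G.inv p) p q (by rw [G.d_inv]) h, G.inv_comp, h, G.comp_unit_left]

theorem comp_inv_cancel_left {p q : G.Arr} (h : G.r p = G.r q) :
    G.comp p (G.comp (G.inv p) q) = q := by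
  rw [← G.comp_assoc p (G.inv p) q (by rw [G.r_inv]) (by rw [G.d_inv, h]), G.comp_inv, h,
    G.comp_unit_left]

theorem inv_comp_rev {p q : G.Arr} (h : G.d p = G.r q) :
    G.inv (G.comp p q) = G.comp (G.inv q) (G.inv p) := by
  have hqp : G.d (G.inv q) = G.r (G.inv p) := by rw [G.d_inv, G.r_inv, h]
  have hcancel : G.comp (G.comp (G.inv q) (G.inv p)) (G.comp p q) = G.d (G.comp p q) := by
    rw [G.comp_assoc _ _ _ hqp (by rw [G.d_inv, G.r_comp p q h]), inv_comp_cancel_left h,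
      G.inv_comp, G.d_comp p q h]
  calc G.inv (G.comp p q)
      = G.comp (G.d (G.comp p q)) (G.inv (G.comp p q)) := by
        rw [← G.r_inv, G.comp_unit_left]
    _ = G.comp (G.inv q) (G.inv p) := by
        rw [← hcancel, comp_inv_cancel_right (by rw [G.d_comp _ _ hqp, G.d_inv, G.r_comp p q h])]

theorem r_mem_units (g : G.Arr) : G.r g ∈ G.units := ⟨G.inv g, G.d_inv g⟩

theorem isOpen_units : IsOpen G.units := by
  refine isOpen_iff_forall_mem_open.2 fun u ⟨w, hw⟩ => ?_
  obtain ⟨U, hUo, hwU, -, hmap⟩ := G.etale w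
  exact ⟨G.d '' U, Set.image_subset_range _ _, hmap U subset_rfl hUo, w, hwU, hw⟩

theorem isOpen_units_diff [T1Space G.units] {S : Set G.Arr} (hS : S.Finite) :
    IsOpen (G.units \ S) := by
  have h := isOpen_units.isOpenMap_subtype_val _
    (hS.preimage Subtype.val_injective.injOn).isClosed.isOpen_compl
  rwa [Set.image_compl_preimage, Subtype.range_coe] at h

theorem Ample.exists_compact_open_bisection (hample : G.Ample) {w : G.Arr} {O : Set G.Arr}
    (hO : IsOpen O) (hw : w ∈ O) :
    ∃ W, IsCompact W ∧ IsOpen W ∧ Set.InjOn G.d W ∧ w ∈ W ∧ W ⊆ O := by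
  obtain ⟨U, hUo, hwU, hinj, hmap⟩ := G.etale w
  have hVo : IsOpen (U ∩ O) := hUo.inter hO
  let e : ↥(U ∩ O) → G.Arr := G.d ∘ Subtype.val
  have he : Topology.IsOpenEmbedding e :=
    .of_continuous_injective_isOpenMap (G.continuous_d.comp continuous_subtype_val)
      (fun v v' h => Subtype.ext (hinj v.2.1 v'.2.1 h)) fun s hs => by
        simpa only [e, Set.image_comp] using hmap (Subtype.val '' s)
          (fun _ ⟨v, _, hv⟩ => hv ▸ v.2.1) (hVo.isOpenMap_subtype_val s hs)
  have hrange : Set.range e = G.d '' (U ∩ O) := by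
    rw [Set.range_comp, Subtype.range_coe]
  obtain ⟨K, hKe, hwK, hKc, hKo⟩ := hample.2 (G.d w) ⟨w, rfl⟩ (G.d '' (U ∩ O))
    ⟨Set.image_subset_range _ _, (hrange ▸ he.isOpen_range).preimage continuous_subtype_val⟩
    ⟨w, ⟨hwU, hw⟩, rfl⟩
  have hKo' : IsOpen K := by
    simpa [Subtype.image_preimage_coe, Set.inter_eq_self_of_subset_right hKo.1]
      using isOpen_units.isOpenMap_subtype_val _ hKo.2
  refine ⟨Subtype.val '' (e ⁻¹' K), ?_, hVo.isOpenMap_subtype_val _ (hKo'.preimage he.continuous),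
    hinj.mono ?_, ⟨⟨w, hwU, hw⟩, hwK, rfl⟩, ?_⟩
  · refine (he.isInducing.isCompact_iff.2 ?_).image continuous_subtype_val
    rwa [Set.image_preimage_eq_of_subset (hrange ▸ hKe)]
  · rintro _ ⟨v, -, rfl⟩
    exact v.2.1
  · rintro _ ⟨v, -, rfl⟩
    exact v.2.2

instance instGroupIsoGrp {x : G.Arr} [Fact (G.d x = x)] : Group (G.IsoGrp x) :=
  G.isoGroup x Fact.out

/-- The arrow `a t b⁻¹ : r b → r a`; for `t ∈ G_x` and `d a = d b = x` it transports the
isotropy group at `x` onto the arrows from `r b` to `r a`. -/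
def sandwich (a t b : G.Arr) : G.Arr := G.comp (G.comp a t) (G.inv b)

variable {x a b e : G.Arr}

theorem d_comp_iso (ha : G.d a = x) (t : G.IsoGrp x) : G.d (G.comp a t.1) = x := by
  rw [G.d_comp a t.1 (ha.trans t.2.2.symm), t.2.1]

theorem r_comp_iso (ha : G.d a = x) (t : G.IsoGrp x) : G.r (G.comp a t.1) = G.r a :=
  G.r_comp a t.1 (ha.trans t.2.2.symm)

theorem d_sandwich (ha : G.d a = x) (hb : G.d b = x) (t : G.IsoGrp x) :
    G.d (G.sandwich a t.1 b) = G.r b := by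
  rw [sandwich, G.d_comp _ _ (by rw [d_comp_iso ha, G.r_inv, hb]), G.d_inv]

theorem r_sandwich (ha : G.d a = x) (hb : G.d b = x) (t : G.IsoGrp x) :
    G.r (G.sandwich a t.1 b) = G.r a := by
  rw [sandwich, G.r_comp _ _ (by rw [d_comp_iso ha, G.r_inv, hb]), r_comp_iso ha]

theorem sandwich_injective (ha : G.d a = x) (hb : G.d b = x) :
    Function.Injective fun t : G.IsoGrp x => G.sandwich a t.1 b := by
  intro s t hst
  have h := congrArg (fun y => G.comp (G.inv a) (G.comp y b)) hst
  simp only [sandwich] at h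
  rw [inv_comp_cancel_right (by rw [d_comp_iso ha, hb]),
    inv_comp_cancel_right (by rw [d_comp_iso ha, hb]), inv_comp_cancel_left (ha.trans s.2.2.symm),
    inv_comp_cancel_left (ha.trans t.2.2.symm)] at h
  exact Subtype.ext h

theorem exists_sandwich_eq (ha : G.d a = x) (hb : G.d b = x) {q : G.Arr} (hd : G.d q = G.r b)
    (hr : G.r q = G.r a) : ∃ t : G.IsoGrp x, G.sandwich a t.1 b = q := by
  have haq : G.d (G.inv a) = G.r q := by rw [G.d_inv, hr]
  have hqb : G.d (G.comp (G.inv a) q) = G.r b := by rw [G.d_comp _ _ haq, hd]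
  refine ⟨⟨G.comp (G.comp (G.inv a) q) b, ?_, ?_⟩, ?_⟩
  · rw [G.d_comp _ _ hqb, hb]
  · rw [G.r_comp _ _ hqb, G.r_comp _ _ haq, G.r_inv, ha]
  · rw [sandwich, ← G.comp_assoc _ _ _ (by rw [G.r_comp _ _ haq, G.r_inv]) hqb,
      comp_inv_cancel_left hr.symm, comp_inv_cancel_right hd]

theorem sandwich_comp_inv_sandwich [Fact (G.d x = x)] (ha : G.d a = x) (he : G.d e = x)
    (hb : G.d b = x) (t s : G.IsoGrp x) :
    G.comp (G.sandwich a t.1 b) (G.inv (G.sandwich e s.1 b)) = G.sandwich a (t * s⁻¹).1 e := by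
  have hts : G.d t.1 = G.r (G.inv s.1) := by rw [t.2.1, G.r_inv, s.2.1]
  have hse : G.d (G.inv s.1) = G.r (G.inv e) := by rw [G.d_inv, s.2.2, G.r_inv, he]
  have hat : G.d a = G.r t.1 := ha.trans t.2.2.symm
  have hbs : G.d b = G.r (G.comp (G.inv s.1) (G.inv e)) := by
    rw [G.r_comp _ _ hse, G.r_inv, s.2.1, hb]
  show G.comp (G.comp (G.comp a t.1) (G.inv b)) (G.inv (G.comp (G.comp e s.1) (G.inv b))) =
    G.comp (G.comp a (G.comp t.1 (G.inv s.1))) (G.inv e)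
  rw [inv_comp_rev (by rw [d_comp_iso he, G.r_inv, hb]), G.inv_inv,
    inv_comp_rev (he.trans s.2.2.symm),
    G.comp_assoc _ _ _ (by rw [G.r_inv, d_comp_iso ha, hb]) (by rw [G.d_inv, G.r_comp _ _ hbs]),
    inv_comp_cancel_left hbs, ← G.comp_assoc a t.1 _ hat hts,
    G.comp_assoc _ _ _ (by rw [G.d_comp _ _ hat]; exact hts) hse]

theorem sandwich_one [Fact (G.d x = x)] {α γ : G.Arr} (hγ : G.d γ = x) (h : G.r γ = G.d α) :
    G.sandwich (G.comp α γ) (1 : G.IsoGrp x).1 γ = α := by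
  show G.comp (G.comp (G.comp α γ) x) (G.inv γ) = α
  rw [← hγ, ← G.d_comp α γ h.symm, G.comp_unit_right, comp_inv_cancel_right h.symm]

variable {R : Type} [CommRing R]

theorem conv_eq_sum (f h : G.Arr → R) (y : G.Arr) (F : Finset G.Arr)
    (hF : ∀ q ∈ F, G.d q = G.d y)
    (hsupp : ∀ q, G.d q = G.d y → f (G.comp y (G.inv q)) * h q ≠ 0 → q ∈ F) :
    G.conv f h y = ∑ q ∈ F, f (G.comp y (G.inv q)) * h q := by
  classical
  have hif : G.conv f h y =
      ∑ᶠ q, if G.d q = G.d y then f (G.comp y (G.inv q)) * h q else 0 :=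
    finsum_congr fun q => finsum_eq_if
  rw [hif, finsum_eq_finsetSum_of_support_subset _ fun q hq => ?_]
  · exact Finset.sum_congr rfl fun q hq => if_pos (hF q hq)
  · by_cases hd : G.d q = G.d y
    · exact hsupp q hd (by simpa [hd] using hq)
    · simp [hd] at hq

theorem conv_apply_eq_zero (f h : G.Arr → R) (y : G.Arr) (hh : ∀ q, G.d q = G.d y → h q = 0) :
    G.conv f h y = 0 := by
  classical
  refine finsum_eq_zero_of_forall_eq_zero fun q => ?_
  rw [finsum_eq_if, ite_eq_right_iff]
  intro hq
  rw [hh q hq, mul_zero]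

/-- Restricted along sandwiches, convolution becomes the product of `R G_x`, provided the
arrows out of `r b` that do not enter `r e` contribute nothing. -/
theorem conv_sandwich [Fact (G.d x = x)] {f h : G.Arr → R} (ha : G.d a = x) (he : G.d e = x)
    (hb : G.d b = x) {F H : MonoidAlgebra R (G.IsoGrp x)}
    (hF : ∀ t, F.coeff t = f (G.sandwich a t.1 e)) (hH : ∀ s, H.coeff s = h (G.sandwich e s.1 b))
    (hvanish : ∀ q z, G.d q = G.r b → G.r q ≠ G.r e → G.d z = G.r q → f z * h q = 0)
    (t : G.IsoGrp x) :
    G.conv f h (G.sandwich a t.1 b) = (F * H).coeff t := by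
  classical
  calc G.conv f h (G.sandwich a t.1 b)
      = ∑ q ∈ H.coeff.support.image fun s => G.sandwich e s.1 b,
          f (G.comp (G.sandwich a t.1 b) (G.inv q)) * h q := by
        refine conv_eq_sum _ _ _ _ ?_ fun q hq hne => ?_
        · simp only [Finset.mem_image]
          rintro _ ⟨s, -, rfl⟩
          rw [d_sandwich he hb, d_sandwich ha hb]
        rw [d_sandwich ha hb] at hq
        by_cases hr : G.r q = G.r e
        · obtain ⟨s, rfl⟩ := exists_sandwich_eq he hb hq hr
          refine Finset.mem_image_of_mem _ (Finsupp.mem_support_iff.2 ?_)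
          rw [hH]
          exact right_ne_zero_of_mul hne
        · refine absurd (hvanish q _ hq hr ?_) hne
          rw [G.d_comp _ _ (by rw [G.r_inv, d_sandwich ha hb, hq]), G.d_inv]
    _ = ∑ s ∈ H.coeff.support, F.coeff (t * s⁻¹) * H.coeff s := by
        rw [Finset.sum_image fun s _ s' _ hss' => sandwich_injective he hb hss']
        refine Finset.sum_congr rfl fun s _ => ?_
        rw [sandwich_comp_inv_sandwich ha he hb, hF, hH]
    _ = (F * H).coeff t := (MonoidAlgebra.coeff_mul_apply_right F H t).symm

theorem indicator_mem_algebraSet {W : Set G.Arr} (hc : IsCompact W) (ho : IsOpen W) :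
    W.indicator (fun _ => (1 : R)) ∈ G.AlgebraSet R :=
  Submodule.subset_span ⟨W, hc, ho, rfl⟩

theorem exists_isCompact_support_subset {f : G.Arr → R} (hf : f ∈ G.AlgebraSet R) :
    ∃ K, IsCompact K ∧ Function.support f ⊆ K := by
  induction hf using Submodule.span_induction with
  | mem f hmem =>
    obtain ⟨U, hUc, -, rfl⟩ := hmem
    exact ⟨U, hUc, Set.support_indicator_subset⟩
  | zero => exact ⟨∅, isCompact_empty, by simp⟩
  | add f g _ _ hfK hgK =>
    obtain ⟨K₁, hK₁, hf₁⟩ := hfK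
    obtain ⟨K₂, hK₂, hg₂⟩ := hgK
    exact ⟨K₁ ∪ K₂, hK₁.union hK₂,
      (Function.support_add f g).trans (Set.union_subset_union hf₁ hg₂)⟩
  | smul r f _ hfK =>
    obtain ⟨K, hK, hfK⟩ := hfK
    exact ⟨K, hK, (Function.support_const_smul_subset r f).trans hfK⟩

theorem finite_inter_fiber_of_isCompact {K : Set G.Arr} (hK : IsCompact K) (u : G.Arr) :
    (K ∩ G.d ⁻¹' {u}).Finite := by
  choose V hVo hVm hVi using fun g =>
    (G.etale g).imp fun _ h => And.intro h.1 (h.2.imp_right And.left)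
  obtain ⟨t, -, hcov⟩ := hK.elim_nhds_subcover V fun a _ => (hVo a).mem_nhds (hVm a)
  refine (t.finite_toSet.biUnion (t := fun a => V a ∩ G.d ⁻¹' {u}) fun a _ => ?_).subset
    fun q hq => ?_
  · exact Set.Subsingleton.finite fun q₁ h₁ q₂ h₂ => hVi a h₁.1 h₂.1 (h₁.2.trans h₂.2.symm)
  · obtain ⟨a, ha, hqa⟩ := Set.mem_iUnion₂.1 (hcov hq.1)
    exact Set.mem_iUnion₂.2 ⟨a, ha, hqa, hq.2⟩

theorem finite_support_inter_fiber {f : G.Arr → R} (hf : f ∈ G.AlgebraSet R) (u : G.Arr) :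
    (Function.support f ∩ G.d ⁻¹' {u}).Finite := by
  obtain ⟨K, hK, hfK⟩ := exists_isCompact_support_subset hf
  exact (finite_inter_fiber_of_isCompact hK u).subset (Set.inter_subset_inter_left _ hfK)

theorem exists_coeff_eq_sandwich {f : G.Arr → R} (hf : f ∈ G.AlgebraSet R) (ha : G.d a = x)
    (hb : G.d b = x) :
    ∃ F : MonoidAlgebra R (G.IsoGrp x), ∀ t, F.coeff t = f (G.sandwich a t.1 b) :=
  have hfin : (Function.support fun t : G.IsoGrp x => f (G.sandwich a t.1 b)).Finite :=
    ((finite_support_inter_fiber hf (G.r b)).preimage (sandwich_injective ha hb).injOn).subset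
      fun t ht => ⟨ht, d_sandwich ha hb t⟩
  ⟨⟨Finsupp.ofSupportFinite _ hfin⟩, fun _ => rfl⟩

theorem Ample.exists_ne_zero_mem_algebraSet [Nontrivial R] (hample : G.Ample) (w : G.Arr) :
    ∃ f ∈ G.AlgebraSet R, f ≠ 0 := by
  obtain ⟨W, hWc, hWo, -, hwW, -⟩ := hample.exists_compact_open_bisection isOpen_univ
    (Set.mem_univ w)
  refine ⟨W.indicator fun _ => 1, indicator_mem_algebraSet hWc hWo, fun h => ?_⟩
  simpa [hwW] using congrFun h w

theorem Ample.exists_mem_algebraSet_apply_sandwich (hample : G.Ample) (he : G.d e = x)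
    (hb : G.d b = x) {O : Set G.Arr} (hO : IsOpen O) (hbO : G.r b ∈ O)
    (C : MonoidAlgebra R (G.IsoGrp x)) :
    ∃ m ∈ G.AlgebraSet R, (∀ s : G.IsoGrp x, m (G.sandwich e s.1 b) = C.coeff s) ∧
      (∀ q, m q ≠ 0 → G.d q ∈ O) ∧ ∀ q, G.d q = G.r b → m q ≠ 0 → G.r q = G.r e := by
  classical
  choose W hWc hWo hWinj hWmem hWO using fun s : G.IsoGrp x =>
    hample.exists_compact_open_bisection (hO.preimage G.continuous_d)
      (show G.d (G.sandwich e s.1 b) ∈ O by rwa [d_sandwich he hb])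
  have hW_fiber : ∀ s q, q ∈ W s → G.d q = G.r b → q = G.sandwich e s.1 b :=
    fun s q hq hd => hWinj s hq (hWmem s) (by rw [hd, d_sandwich he hb])
  set m : G.Arr → R := ∑ s ∈ C.coeff.support, C.coeff s • (W s).indicator fun _ => 1 with hm
  have hmW : ∀ q, m q ≠ 0 → ∃ s, q ∈ W s := by
    intro q hq
    rw [hm, Finset.sum_apply] at hq
    obtain ⟨s, -, hs⟩ := Finset.exists_ne_zero_of_sum_ne_zero hq
    exact ⟨s, by_contra fun h => hs (by simp [h])⟩
  refine ⟨m, Submodule.sum_mem _ fun s _ =>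
      Submodule.smul_mem _ _ (indicator_mem_algebraSet (hWc s) (hWo s)),
    fun s => ?_, fun q hq => ?_, fun q hd hq => ?_⟩
  · rw [hm, Finset.sum_apply, Finset.sum_eq_single s]
    · simp [hWmem s]
    · intro s' _ hs'
      have hnot : G.sandwich e s.1 b ∉ W s' := fun h =>
        hs' (sandwich_injective he hb (hW_fiber s' _ h (d_sandwich he hb s))).symm
      simp [hnot]
    · intro hs
      simp [Finsupp.notMem_support_iff.1 hs]
  · obtain ⟨s, hs⟩ := hmW q hq
    exact hWO s hs
  · obtain ⟨s, hs⟩ := hmW q hq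
    rw [hW_fiber s q hs hd, r_sandwich he hb]

theorem Ample.mul_mul_eq_zero_of_conv_conv_eq_zero [Fact (G.d x = x)] (hample : G.Ample)
    {c : G.Arr} {f g : G.Arr → R} (hg : g ∈ G.AlgebraSet R)
    (hfg : ∀ h ∈ G.AlgebraSet R, G.conv (G.conv f h) g = 0)
    (ha : G.d a = x) (he : G.d e = x) (hb : G.d b = x) (hc : G.d c = x)
    {F H : MonoidAlgebra R (G.IsoGrp x)}
    (hF : ∀ t, F.coeff t = f (G.sandwich a t.1 e)) (hH : ∀ t, H.coeff t = g (G.sandwich b t.1 c))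
    (C : MonoidAlgebra R (G.IsoGrp x)) : F * C * H = 0 := by
  have : T2Space G.units := hample.1
  set S := G.r '' (Function.support g ∩ G.d ⁻¹' {G.r c}) \ {G.r b}
  have hS : S.Finite := ((finite_support_inter_fiber hg _).image _).sdiff
  obtain ⟨m, hm, hmC, hmO, hmr⟩ := hample.exists_mem_algebraSet_apply_sandwich he hb
    (isOpen_units_diff hS) ⟨r_mem_units b, fun h => h.2 rfl⟩ C
  have hfm : ∀ t, (F * C).coeff t = G.conv f m (G.sandwich a t.1 b) := fun t =>
    (conv_sandwich ha he hb hF (fun s => (hmC s).symm) (fun q _ hq hr _ => by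
      rw [not_not.1 (mt (hmr q hq) hr), mul_zero]) t).symm
  -- Arrows `q` out of `r c` that miss `r b` end in `S`, where `m` vanishes.
  have hfmg : ∀ t, G.conv (G.conv f m) g (G.sandwich a t.1 c) = (F * C * H).coeff t := by
    refine conv_sandwich ha hb hc hfm hH fun q z hq hr hz => ?_
    by_cases hgq : g q = 0
    · rw [hgq, mul_zero]
    rw [conv_apply_eq_zero f m z fun p hp => ?_, zero_mul]
    by_contra hmp
    exact (hmO p hmp).2 (by rw [hp, hz]; exact ⟨⟨q, ⟨hgq, hq⟩, rfl⟩, hr⟩)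
  ext t
  rw [← hfmg, hfg m hm]
  rfl

end EtaleGroupoid

/-- If an ample groupoid `G` has an `R`-dense orbit `O_x` whose
isotropy group algebra `R G_x` is prime, then the convolution algebra `RG` is
prime. -/
theorem stmt10 (R : Type) [CommRing R] (G : EtaleGroupoid) (hample : G.Ample)
    (x : G.Arr) (hx : G.d x = x)
    (hdense : G.RDense R (G.orbit x))
    (hiso : letI := G.isoGroup x hx
      (∃ a : MonoidAlgebra R (G.IsoGrp x), a ≠ 0) ∧
      ∀ a b : MonoidAlgebra R (G.IsoGrp x),
        (∀ c : MonoidAlgebra R (G.IsoGrp x), a * c * b = 0) → a = 0 ∨ b = 0) :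
    G.AlgPrime R := by
  have : Fact (G.d x = x) := ⟨hx⟩
  obtain ⟨⟨a₀, ha₀⟩, hprime⟩ := hiso
  have : Nontrivial R := by
    by_contra h
    rw [not_nontrivial_iff_subsingleton] at h
    exact ha₀ (Subsingleton.elim _ _)
  refine ⟨hample.exists_ne_zero_mem_algebraSet x, fun f hf g hg hfg => ?_⟩
  by_contra! hne
  obtain ⟨α, hfα, γ, hγ, hγα⟩ := hdense f hf hne.1
  obtain ⟨β, hgβ, δ, hδ, hδβ⟩ := hdense g hg hne.2
  have hαγ : G.d (G.comp α γ) = x := by rw [G.d_comp _ _ hγα.symm, hγ]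
  have hβδ : G.d (G.comp β δ) = x := by rw [G.d_comp _ _ hδβ.symm, hδ]
  obtain ⟨F, hF⟩ := EtaleGroupoid.exists_coeff_eq_sandwich hf hαγ hγ
  obtain ⟨H, hH⟩ := EtaleGroupoid.exists_coeff_eq_sandwich hg hβδ hδ
  rcases hprime F H (hample.mul_mul_eq_zero_of_conv_conv_eq_zero hg hfg hαγ hγ hβδ hδ hF hH)
    with rfl | rfl
  · exact hfα (by rw [← EtaleGroupoid.sandwich_one hγ hγα, ← hF]; rfl)
  · exact hgβ (by rw [← EtaleGroupoid.sandwich_one hδ hδβ, ← hH]; rfl)
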